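/- If the vacancy function 𝒱 is weakly decreasing in its first argument, then for any finite school set H, capacities C ∈ ℕ^H, and positive finite measure η on Θ, the set of (η, 𝒱)-stable outcomes is non-empty and forms a complete lattice with respect to the partial order ⪰. -/

import Mathlib

open MeasureTheory Filter
open scoped Classical ENNReal

noncomputable section

/-- A student type: a complete (linear) order on `Option H` (`none` is the outside option `∅`),
together with a priority score in `[0,1]` at each school. -/
abbrev Student (H : Type*) := LinearOrder (Option H) × (H → unitInterval)

instance (H : Type*) : MeasurableSpace (LinearOrder (Option H)) := ⊤
instance (H : Type*) : TopologicalSpace (LinearOrder (Option H)) := ⊥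

/-- `Prefers θ a b` : student `θ` strictly prefers option `a` to option `b`. -/
def Prefers {H : Type*} (θ : Student H) (a b : Option H) : Prop := θ.1.lt b a

/-- Priority of `θ` at option `h` (junk value `1` at the outside option). -/
def priOf {H : Type*} (θ : Student H) : Option H → unitInterval := fun o => o.elim 1 θ.2

abbrev MatchingFun (H : Type*) := Student H → Option H → ℝ
abbrev InterestFun (H : Type*) := H → unitInterval → ℝ
abbrev AdmissionsFun (H : Type*) := Option H → unitInterval → ℝ

section Defs
variable {H : Type*} [Fintype H]

/-- `M` maps each student to a probability distribution over `Option H`. -/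
def IsMatchingFun (M : MatchingFun H) : Prop :=
  ∀ θ : Student H, (∀ h, 0 ≤ M θ h) ∧ ∑ h : Option H, M θ h = 1

/-- Interest functions are componentwise weakly decreasing and nonnegative. -/
def IsInterestFun (I : InterestFun H) : Prop :=
  ∀ h, Antitone (I h) ∧ ∀ p, 0 ≤ I h p

/-- Admissions functions are componentwise weakly increasing with values in `[0,1]`,
and everyone is always admitted to the outside option. -/
def IsAdmissionsFun (A : AdmissionsFun H) : Prop :=
  (∀ h, Monotone (A h) ∧ ∀ p, A h p ∈ Set.Icc (0:ℝ) 1) ∧ ∀ p, A none p = 1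

/-- The interest function `𝓘(M)` of a matching `M`. -/
def interestOf (η : Measure (Student H)) (M : MatchingFun H) : InterestFun H :=
  fun h p => ∫ θ, (if p ≤ θ.2 h then (1:ℝ) else 0) *
    (1 - ∑ h' ∈ Finset.univ.filter (fun h' : Option H => Prefers θ h' (some h)), M θ h') ∂η

/-- The admissions function `𝓐(I)` of an interest function `I`, given a vacancy function `V`
and capacities `C`. -/
def admissionsOf (V : ℝ → ℕ → ℝ) (C : H → ℕ) (I : InterestFun H) : AdmissionsFun H :=
  fun h p => h.elim 1 fun h0 => V (I h0 p) (C h0)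

/-- The matching `𝓜(A)` of an admissions function `A`. -/
def matchingOf (A : AdmissionsFun H) : MatchingFun H := fun θ h =>
  A h (priOf θ h) *
    ∏ h' ∈ Finset.univ.filter (fun h' : Option H => Prefers θ h' h), (1 - A h' (priOf θ h'))

/-- A matching `M` is `(η, V)`-stable if `M = 𝓜(𝓐(𝓘(M)))`. -/
def StableMatching (η : Measure (Student H)) (V : ℝ → ℕ → ℝ) (C : H → ℕ)
    (M : MatchingFun H) : Prop :=
  IsMatchingFun M ∧ M = matchingOf (admissionsOf V C (interestOf η M))

/-- An interest function `I` is `(η, V)`-stable if `I = 𝓘(𝓜(𝓐(I)))`. -/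
def StableInterest (η : Measure (Student H)) (V : ℝ → ℕ → ℝ) (C : H → ℕ)
    (I : InterestFun H) : Prop :=
  IsInterestFun I ∧ I = interestOf η (matchingOf (admissionsOf V C I))

/-- An admissions function `A` is `(η, V)`-stable if `A = 𝓐(𝓘(𝓜(A)))`. -/
def StableAdmissions (η : Measure (Student H)) (V : ℝ → ℕ → ℝ) (C : H → ℕ)
    (A : AdmissionsFun H) : Prop :=
  IsAdmissionsFun A ∧ A = admissionsOf V C (interestOf η (matchingOf A))

/-- An outcome `(M, I, A)` is `(η, V)`-stable. -/
def StableOutcome (η : Measure (Student H)) (V : ℝ → ℕ → ℝ) (C : H → ℕ)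
    (M : MatchingFun H) (I : InterestFun H) (A : AdmissionsFun H) : Prop :=
  IsMatchingFun M ∧ IsInterestFun I ∧ IsAdmissionsFun A ∧
  M = matchingOf A ∧ I = interestOf η M ∧ A = admissionsOf V C I

/-- The deterministic vacancy function `V^det(λ, C) = 1(λ < C)`. -/
def Vdet : ℝ → ℕ → ℝ := fun lam C => if lam < (C : ℝ) then 1 else 0

/-- The Poisson vacancy function `V^pois(λ, C) = Σ_{k<C} e^{-λ} λ^k / k!`. -/
def Vpois : ℝ → ℕ → ℝ := fun lam C =>
  ∑ k ∈ Finset.range C, Real.exp (-lam) * lam ^ k / (Nat.factorial k : ℝ)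

/-- A measure `η` on student types has strict priorities. -/
def StrictPriorities (η : Measure (Student H)) : Prop :=
  ∀ (h : H) (p : unitInterval), η {θ : Student H | Prefers θ (some h) none ∧ θ.2 h = p} = 0

end Defs

section Orders
variable {H : Type*} [Fintype H]

/-- `M ⪯ M'` : every student prefers `M'` to `M` in the sense of first-order stochastic
dominance. -/
def MatchLE (M M' : MatchingFun H) : Prop :=
  ∀ (θ : Student H) (h : Option H),
    ∑ h' ∈ Finset.univ.filter (fun h' : Option H => Prefers θ h' h ∨ h' = h), M θ h' ≤
    ∑ h' ∈ Finset.univ.filter (fun h' : Option H => Prefers θ h' h ∨ h' = h), M' θ h'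

/-- The partial order `⪯` on outcomes `(M, I, A)`: the matching increases (in the FOSD sense),
admission probabilities increase, and interest decreases. -/
def OutcomeLE (x y : MatchingFun H × InterestFun H × AdmissionsFun H) : Prop :=
  MatchLE x.1 y.1 ∧ (∀ h p, y.2.1 h p ≤ x.2.1 h p) ∧ (∀ h p, x.2.2 h p ≤ y.2.2 h p)

end Orders


/-!
Encode an admissions function by its school components, monotone maps `[0,1] → [0,1]`; these
form a complete lattice. Raising admission probabilities makes every student weakly better off
and so lowers every school's interest, which by monotonicity of the vacancy function raises
admission probabilities again: `A ↦ 𝓐(𝓘(𝓜(A)))` is monotone, and by Knaster–Tarski its fixed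
points form a complete lattice. A stable outcome is determined by its admissions function, and
the order `⪯` between stable outcomes is the pointwise order of their admissions functions, so
the stable outcomes inherit the lattice structure.
-/

open Finset

section Lattice

variable {L β : Type*} [CompleteLattice L] {e : L → β} {r : β → β → Prop}

theorem exists_lub_of_subset_range (hr : ∀ k k', r (e k) (e k') ↔ k ≤ k') {T : Set β}
    (hT : T ⊆ Set.range e) :
    ∃ k, (∀ x ∈ T, r x (e k)) ∧ ∀ k', (∀ x ∈ T, r x (e k')) → r (e k) (e k') := by
  refine ⟨sSup (e ⁻¹' T), fun x hx => ?_, fun k' hk' => (hr _ _).2 (sSup_le fun j hj => ?_)⟩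
  · obtain ⟨j, rfl⟩ := hT hx
    exact (hr _ _).2 (le_sSup hx)
  · exact (hr _ _).1 (hk' _ hj)

theorem exists_glb_of_subset_range (hr : ∀ k k', r (e k) (e k') ↔ k ≤ k') {T : Set β}
    (hT : T ⊆ Set.range e) :
    ∃ k, (∀ x ∈ T, r (e k) x) ∧ ∀ k', (∀ x ∈ T, r (e k') x) → r (e k') (e k) :=
  exists_lub_of_subset_range (L := Lᵒᵈ) (e := e ∘ OrderDual.ofDual) (r := flip r)
    (fun k k' => hr k' k) hT

end Lattice

section SchoolChoice

variable {H : Type*}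

theorem prefers_trans {θ : Student H} {a b c : Option H} (hab : Prefers θ a b)
    (hbc : Prefers θ b c) : Prefers θ a c :=
  @lt_trans _ θ.1.toPreorder _ _ _ hbc hab

/-- Admissions functions restricted to the schools; the outside option always admits. -/
abbrev AdmissionsLattice (H : Type*) := H → (unitInterval →o unitInterval)

-- Without this shortcut, the Knaster–Tarski instance on `Function.fixedPoints` is not found.
instance : CompleteLattice (AdmissionsLattice H) := Pi.instCompleteLattice

def toAdmissions (k : AdmissionsLattice H) : AdmissionsFun H :=
  fun h p => h.elim 1 fun h => (k h p : ℝ)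

def ofAdmissions (A : AdmissionsFun H) (hA : IsAdmissionsFun A) : AdmissionsLattice H :=
  fun h => ⟨fun p => ⟨A (some h) p, ((hA.1 (some h)).2 p)⟩,
    fun _ _ hpq => Subtype.mk_le_mk.2 ((hA.1 (some h)).1 hpq)⟩

theorem IsAdmissionsFun.le_one {A : AdmissionsFun H} (hA : IsAdmissionsFun A) (h : Option H)
    (p : unitInterval) : A h p ≤ 1 :=
  ((hA.1 h).2 p).2

theorem isAdmissionsFun_toAdmissions (k : AdmissionsLattice H) :
    IsAdmissionsFun (toAdmissions k) := by
  refine ⟨fun h => ?_, fun _ => rfl⟩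
  cases h with
  | none => exact ⟨monotone_const, fun _ => ⟨zero_le_one, le_rfl⟩⟩
  | some h => exact ⟨fun _ _ hpq => Subtype.coe_le_coe.2 ((k h).monotone hpq), fun p => (k h p).2⟩

theorem toAdmissions_ofAdmissions {A : AdmissionsFun H} (hA : IsAdmissionsFun A) :
    toAdmissions (ofAdmissions A hA) = A := by
  funext h p
  cases h with
  | none => exact (hA.2 p).symm
  | some h => rfl

theorem toAdmissions_le_toAdmissions_iff {k k' : AdmissionsLattice H} :
    (∀ h p, toAdmissions k h p ≤ toAdmissions k' h p) ↔ k ≤ k' := by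
  refine ⟨fun hle h p => Subtype.coe_le_coe.1 (hle (some h) p), fun hle h p => ?_⟩
  cases h with
  | none => exact le_rfl
  | some h => exact Subtype.coe_le_coe.2 (hle h p)

variable [Fintype H]

theorem sum_matchingOf_of_upperClosed (A : AdmissionsFun H) (θ : Student H)
    (S : Finset (Option H)) (hS : ∀ a ∈ S, ∀ b, Prefers θ b a → b ∈ S) :
    ∑ h ∈ S, matchingOf A θ h = 1 - ∏ h ∈ S, (1 - A h (priOf θ h)) := by
  rw [@prod_one_sub_ordered (Option H) ℝ _ (@OrderDual.instLinearOrder _ θ.1), sub_sub_cancel]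
  refine sum_congr rfl fun a ha => congrArg _ (prod_congr ?_ fun _ _ => rfl)
  ext b
  simp only [mem_filter, mem_univ, true_and]
  exact ⟨fun hba => ⟨hS a ha b hba, hba⟩, And.right⟩

theorem isMatchingFun_matchingOf {A : AdmissionsFun H} (hA : ∀ h p, A h p ∈ Set.Icc (0:ℝ) 1)
    (hnone : ∀ p, A none p = 1) : IsMatchingFun (matchingOf A) := by
  refine fun θ => ⟨fun h => mul_nonneg (hA h _).1
    (prod_nonneg fun h' _ => sub_nonneg.2 (hA h' _).2), ?_⟩
  rw [sum_matchingOf_of_upperClosed A θ univ fun _ _ _ _ => mem_univ _,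
    prod_eq_zero (mem_univ none) (by rw [hnone, sub_self]), sub_zero]

theorem matchLE_matchingOf {A A' : AdmissionsFun H} (hA' : ∀ h p, A' h p ≤ 1)
    (hAA' : ∀ h p, A h p ≤ A' h p) : MatchLE (matchingOf A) (matchingOf A') := by
  intro θ h
  have hclosed : ∀ a ∈ univ.filter (fun h' => Prefers θ h' h ∨ h' = h), ∀ b,
      Prefers θ b a → b ∈ univ.filter (fun h' => Prefers θ h' h ∨ h' = h) := by
    simp only [mem_filter, mem_univ, true_and]
    rintro a (hah | rfl) b hba
    exacts [Or.inl (prefers_trans hba hah), Or.inl hba]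
  rw [sum_matchingOf_of_upperClosed A θ _ hclosed, sum_matchingOf_of_upperClosed A' θ _ hclosed]
  exact sub_le_sub_left (prod_le_prod (fun h' _ => sub_nonneg.2 (hA' h' _))
    fun h' _ => sub_le_sub_left (hAA' h' _) 1) 1

def interestIntegrand (A : AdmissionsFun H) (h : H) (p : unitInterval) (θ : Student H) : ℝ :=
  (if p ≤ θ.2 h then 1 else 0) *
    ∏ h' ∈ univ.filter (fun h' => Prefers θ h' (some h)), (1 - A h' (priOf θ h'))

theorem interestOf_matchingOf_eq (η : Measure (Student H)) (A : AdmissionsFun H) (h : H)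
    (p : unitInterval) :
    interestOf η (matchingOf A) h p = ∫ θ, interestIntegrand A h p θ ∂η := by
  refine integral_congr_ae (Eventually.of_forall fun θ => ?_)
  have hclosed : ∀ a ∈ univ.filter (fun h' => Prefers θ h' (some h)), ∀ b,
      Prefers θ b a → b ∈ univ.filter (fun h' => Prefers θ h' (some h)) := by
    simp only [mem_filter, mem_univ, true_and]
    exact fun a hah b hba => prefers_trans hba hah
  simp only [interestIntegrand, sum_matchingOf_of_upperClosed A θ _ hclosed, sub_sub_cancel]

theorem interestIntegrand_nonneg {A : AdmissionsFun H} (hA : ∀ h p, A h p ≤ 1) (h : H)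
    (p : unitInterval) (θ : Student H) : 0 ≤ interestIntegrand A h p θ :=
  mul_nonneg (by split_ifs <;> norm_num) (prod_nonneg fun h' _ => sub_nonneg.2 (hA h' _))

theorem interestIntegrand_le_one {A : AdmissionsFun H} (hA : ∀ h p, A h p ∈ Set.Icc (0:ℝ) 1)
    (h : H) (p : unitInterval) (θ : Student H) : interestIntegrand A h p θ ≤ 1 :=
  mul_le_one₀ (by split_ifs <;> norm_num) (prod_nonneg fun h' _ => sub_nonneg.2 (hA h' _).2)
    (prod_le_one (fun h' _ => sub_nonneg.2 (hA h' _).2)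
      fun h' _ => sub_le_self 1 (hA h' _).1)

theorem interestIntegrand_anti {A A' : AdmissionsFun H} (hA' : ∀ h p, A' h p ≤ 1)
    (hAA' : ∀ h p, A h p ≤ A' h p) (h : H) {p q : unitInterval} (hpq : p ≤ q) (θ : Student H) :
    interestIntegrand A' h q θ ≤ interestIntegrand A h p θ := by
  have hind : (if q ≤ θ.2 h then (1:ℝ) else 0) ≤ if p ≤ θ.2 h then 1 else 0 := by
    split_ifs with hq hp <;> first | exact absurd (hpq.trans hq) hp | norm_num
  exact mul_le_mul hind (prod_le_prod (fun h' _ => sub_nonneg.2 (hA' h' _))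
    fun h' _ => sub_le_sub_left (hAA' h' _) 1) (prod_nonneg fun h' _ => sub_nonneg.2 (hA' h' _))
    (by split_ifs <;> norm_num)

theorem measurable_interestIntegrand {A : AdmissionsFun H} (hA : ∀ h, Monotone (A h)) (h : H)
    (p : unitInterval) : Measurable (interestIntegrand A h p) := by
  have hpri : ∀ h', Measurable fun θ : Student H => A h' (priOf θ h')
    | none => (measurable_const : Measurable fun _ : Student H => A none 1)
    | some h' => (hA (some h')).measurable.comp ((measurable_pi_apply h').comp measurable_snd)
  have hpref : ∀ a b : Option H, MeasurableSet {θ : Student H | Prefers θ a b} :=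
    fun a b => measurable_fst (MeasurableSpace.measurableSet_top
      (s := {L : LinearOrder (Option H) | L.lt b a}))
  unfold interestIntegrand
  simp only [prod_filter]
  exact (Measurable.ite (((measurable_pi_apply h).comp measurable_snd) measurableSet_Ici)
    measurable_const measurable_const).mul
    (Finset.measurable_prod _ fun h' _ => Measurable.ite (hpref h' (some h))
      (measurable_const.sub (hpri h')) measurable_const)

theorem integrable_interestIntegrand (η : Measure (Student H)) [IsFiniteMeasure η]
    {A : AdmissionsFun H} (hA : IsAdmissionsFun A) (h : H) (p : unitInterval) :
    Integrable (interestIntegrand A h p) η :=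
  Integrable.of_bound (measurable_interestIntegrand (fun h => (hA.1 h).1) h p).aestronglyMeasurable
    1 (Eventually.of_forall fun θ => by
      rw [Real.norm_eq_abs, abs_of_nonneg (interestIntegrand_nonneg hA.le_one h p θ)]
      exact interestIntegrand_le_one (fun h => (hA.1 h).2) h p θ)

theorem interestOf_matchingOf_nonneg (η : Measure (Student H)) {A : AdmissionsFun H}
    (hA : ∀ h p, A h p ≤ 1) (h : H) (p : unitInterval) :
    0 ≤ interestOf η (matchingOf A) h p := by
  rw [interestOf_matchingOf_eq]
  exact integral_nonneg (interestIntegrand_nonneg hA h p)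

theorem interestOf_matchingOf_anti (η : Measure (Student H)) [IsFiniteMeasure η]
    {A A' : AdmissionsFun H} (hA : IsAdmissionsFun A) (hA' : IsAdmissionsFun A')
    (hAA' : ∀ h p, A h p ≤ A' h p) (h : H) {p q : unitInterval} (hpq : p ≤ q) :
    interestOf η (matchingOf A') h q ≤ interestOf η (matchingOf A) h p := by
  rw [interestOf_matchingOf_eq, interestOf_matchingOf_eq]
  exact integral_mono (integrable_interestIntegrand η hA' h q)
    (integrable_interestIntegrand η hA h p)
    (interestIntegrand_anti hA'.le_one hAA' h hpq)

variable (η : Measure (Student H)) [IsFiniteMeasure η] (V : ℝ → ℕ → ℝ) (C : H → ℕ)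

/-- The map `A ↦ 𝓐(𝓘(𝓜(A)))` on school components. -/
def stabilityMap (hVrange : ∀ (x : ℝ) (c : ℕ), 0 ≤ x → V x c ∈ Set.Icc (0:ℝ) 1)
    (hVmono : ∀ (c : ℕ) (x y : ℝ), 0 ≤ x → x ≤ y → V y c ≤ V x c) :
    AdmissionsLattice H →o AdmissionsLattice H where
  toFun k h :=
    have hk := isAdmissionsFun_toAdmissions k
    ⟨fun p => ⟨V (interestOf η (matchingOf (toAdmissions k)) h p) (C h),
        hVrange _ _ (interestOf_matchingOf_nonneg η hk.le_one h p)⟩,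
      fun _ _ hpq => Subtype.mk_le_mk.2 (hVmono _ _ _ (interestOf_matchingOf_nonneg η hk.le_one h _)
        (interestOf_matchingOf_anti η hk hk (fun _ _ => le_rfl) h hpq))⟩
  monotone' k k' hkk' h p :=
    have hk' := isAdmissionsFun_toAdmissions k'
    Subtype.mk_le_mk.2 (hVmono _ _ _ (interestOf_matchingOf_nonneg η hk'.le_one h p)
      (interestOf_matchingOf_anti η (isAdmissionsFun_toAdmissions k) hk'
        (toAdmissions_le_toAdmissions_iff.2 hkk') h le_rfl))

def outcomeOf (k : AdmissionsLattice H) : MatchingFun H × InterestFun H × AdmissionsFun H :=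
  (matchingOf (toAdmissions k), interestOf η (matchingOf (toAdmissions k)), toAdmissions k)

theorem outcomeLE_outcomeOf_iff {k k' : AdmissionsLattice H} :
    OutcomeLE (outcomeOf η k) (outcomeOf η k') ↔ k ≤ k' := by
  refine ⟨fun hle => toAdmissions_le_toAdmissions_iff.1 hle.2.2, fun hkk' => ?_⟩
  have hle := toAdmissions_le_toAdmissions_iff.2 hkk'
  have hk := isAdmissionsFun_toAdmissions k
  have hk' := isAdmissionsFun_toAdmissions k'
  exact ⟨matchLE_matchingOf hk'.le_one hle,
    fun h p => interestOf_matchingOf_anti η hk hk' hle h le_rfl, hle⟩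

variable (hVrange : ∀ (x : ℝ) (c : ℕ), 0 ≤ x → V x c ∈ Set.Icc (0:ℝ) 1)
  (hVmono : ∀ (c : ℕ) (x y : ℝ), 0 ≤ x → x ≤ y → V y c ≤ V x c)

theorem stableOutcome_outcomeOf {k : AdmissionsLattice H}
    (hk : Function.IsFixedPt (stabilityMap η V C hVrange hVmono) k) :
    StableOutcome η V C (outcomeOf η k).1 (outcomeOf η k).2.1 (outcomeOf η k).2.2 := by
  have hA := isAdmissionsFun_toAdmissions k
  refine ⟨isMatchingFun_matchingOf (fun h => (hA.1 h).2) hA.2,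
    fun h => ⟨fun _ _ hpq => interestOf_matchingOf_anti η hA hA (fun _ _ => le_rfl) h hpq,
      interestOf_matchingOf_nonneg η hA.le_one h⟩, hA, rfl, rfl, ?_⟩
  funext h p
  cases h with
  | none => rfl
  | some h => exact congrArg Subtype.val (DFunLike.congr_fun (congrFun hk h) p).symm

theorem exists_outcomeOf_eq_of_stableOutcome {x : MatchingFun H × InterestFun H × AdmissionsFun H}
    (hx : StableOutcome η V C x.1 x.2.1 x.2.2) :
    ∃ k, Function.IsFixedPt (stabilityMap η V C hVrange hVmono) k ∧ outcomeOf η k = x := by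
  obtain ⟨M, I, A⟩ := x
  obtain ⟨-, -, hA, hM, hI, hV⟩ := hx
  dsimp only at hA hM hI hV
  subst hI hM
  refine ⟨ofAdmissions A hA, funext fun h => OrderHom.ext _ _ (funext fun p => Subtype.ext ?_), ?_⟩
  · change V (interestOf η (matchingOf (toAdmissions (ofAdmissions A hA))) h p) (C h) = A (some h) p
    rw [toAdmissions_ofAdmissions]
    exact (congrFun (congrFun hV (some h)) p).symm
  · simp only [outcomeOf, toAdmissions_ofAdmissions]

end SchoolChoice

/-- If the vacancy function `V : ℝ₊ × ℕ → [0,1]` is weakly decreasing in its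
first argument, then for any finite `H`, capacities `C` and positive finite measure `η`, the set
of `(η, V)`-stable outcomes is non-empty and forms a complete lattice with respect to `⪯`
(every subset of the stable set has a least upper bound and a greatest lower bound within the
stable set). -/
theorem stmt4 {H : Type*} [Fintype H] (V : ℝ → ℕ → ℝ)
    (hVrange : ∀ (x : ℝ) (c : ℕ), 0 ≤ x → V x c ∈ Set.Icc (0:ℝ) 1)
    (hVmono : ∀ (c : ℕ) (x y : ℝ), 0 ≤ x → x ≤ y → V y c ≤ V x c)
    (C : H → ℕ) (η : Measure (Student H)) [IsFiniteMeasure η] :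
    (∃ M I A, StableOutcome η V C M I A) ∧
    (∀ T : Set (MatchingFun H × InterestFun H × AdmissionsFun H),
      (∀ x ∈ T, StableOutcome η V C x.1 x.2.1 x.2.2) →
      ((∃ z, StableOutcome η V C z.1 z.2.1 z.2.2 ∧ (∀ x ∈ T, OutcomeLE x z) ∧
          ∀ w, StableOutcome η V C w.1 w.2.1 w.2.2 → (∀ x ∈ T, OutcomeLE x w) → OutcomeLE z w) ∧
       (∃ z, StableOutcome η V C z.1 z.2.1 z.2.2 ∧ (∀ x ∈ T, OutcomeLE z x) ∧
          ∀ w, StableOutcome η V C w.1 w.2.1 w.2.2 → (∀ x ∈ T, OutcomeLE w x) → OutcomeLE w z))) := by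
  let e (k : Function.fixedPoints (stabilityMap η V C hVrange hVmono)) := outcomeOf η k.1
  have he : ∀ k k', OutcomeLE (e k) (e k') ↔ k ≤ k' := fun _ _ => outcomeLE_outcomeOf_iff η
  have hstable : ∀ k, StableOutcome η V C (e k).1 (e k).2.1 (e k).2.2 :=
    fun k => stableOutcome_outcomeOf η V C hVrange hVmono k.2
  have hrange : ∀ x, StableOutcome η V C x.1 x.2.1 x.2.2 → x ∈ Set.range e := fun _ hx =>
    let ⟨k, hk, hkx⟩ := exists_outcomeOf_eq_of_stableOutcome η V C hVrange hVmono hx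
    ⟨⟨k, hk⟩, hkx⟩
  refine ⟨⟨_, _, _, hstable ⊥⟩, fun T hT => ⟨?_, ?_⟩⟩
  · obtain ⟨k, hub, hleast⟩ := exists_lub_of_subset_range he fun x hx => hrange x (hT x hx)
    refine ⟨e k, hstable k, hub, fun w hw hwub => ?_⟩
    obtain ⟨k', rfl⟩ := hrange w hw
    exact hleast k' hwub
  · obtain ⟨k, hlb, hgreatest⟩ := exists_glb_of_subset_range he fun x hx => hrange x (hT x hx)
    refine ⟨e k, hstable k, hlb, fun w hw hwlb => ?_⟩
    obtain ⟨k', rfl⟩ := hrange w hw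
    exact hgreatest k' hwlb
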